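/- arXiv:math/0501323 — 6 statements merged into one kernel-verified Lean document; each statement's English description precedes it below -/
import Mathlib

section
/- Let V be a 2-dimensional totally isotropic subspace of M₂(ℝ) with respect to the determinant form. Then either all nonzero matrices in V have the same 1-dimensional image (there is a line L ⊆ ℝ² with range(A) ⊆ L for all A ∈ V), or all nonzero matrices in V have the same 1-dimensional kernel (there is a line L ⊆ ℝ² with L ⊆ ker(A) for all A ∈ V). -/
/-!
Take a basis `A, B` of `V`. A common kernel vector of `A` and `B` spans a line killed by all of
`V`. Otherwise pick nonzero `u ∈ ker A` and `v ∈ ker B`: then `(A + B) u = B u` and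
`(A + B) v = A v` are nonzero and, `A + B` being singular, parallel. Since `A` and `B` are
singular, their images are the lines through `A v` and `B u`, which therefore coincide.
-/

open Matrix Module Submodule

section Line

variable {K : Type*} [Field K]

def cross (x y : Fin 2 → K) : K := x 0 * y 1 - x 1 * y 0

lemma cross_mulVec (M : Matrix (Fin 2) (Fin 2) K) (x y : Fin 2 → K) :
    cross (M *ᵥ x) (M *ᵥ y) = M.det * cross x y := by
  simp only [cross, mulVec, dotProduct, Fin.sum_univ_two, det_fin_two]
  ring

lemma mem_span_singleton_of_cross_eq_zero {w z : Fin 2 → K} (hw : w ≠ 0) (h : cross w z = 0) :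
    z ∈ K ∙ w := by
  rw [mem_span_singleton]
  unfold cross at h
  by_cases h0 : w 0 = 0
  · have h1 : w 1 ≠ 0 := fun h1 => hw (funext fun i => by fin_cases i <;> assumption)
    refine ⟨z 1 / w 1, funext fun i => ?_⟩
    fin_cases i
    · simp only [Fin.zero_eta, Pi.smul_apply, smul_eq_mul]
      field_simp
      linear_combination h
    · simp [h1]
  · refine ⟨z 0 / w 0, funext fun i => ?_⟩
    fin_cases i
    · simp [h0]
    · simp only [Fin.mk_one, Pi.smul_apply, smul_eq_mul]
      field_simp
      linear_combination -h

lemma range_mulVecLin_le_span_of_det_eq_zero {M : Matrix (Fin 2) (Fin 2) K} (hM : M.det = 0)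
    {x : Fin 2 → K} (hx : M *ᵥ x ≠ 0) : LinearMap.range M.mulVecLin ≤ K ∙ (M *ᵥ x) := by
  rintro _ ⟨y, rfl⟩
  rw [mulVecLin_apply]
  exact mem_span_singleton_of_cross_eq_zero hx (by rw [cross_mulVec, hM, zero_mul])

lemma ranges_le_line_or_line_le_kers {A B : Matrix (Fin 2) (Fin 2) K}
    (hA : A.det = 0) (hB : B.det = 0) (hAB : (A + B).det = 0) :
    (∃ L : Submodule K (Fin 2 → K), finrank K L = 1 ∧
        LinearMap.range A.mulVecLin ≤ L ∧ LinearMap.range B.mulVecLin ≤ L) ∨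
    (∃ L : Submodule K (Fin 2 → K), finrank K L = 1 ∧
        L ≤ LinearMap.ker A.mulVecLin ∧ L ≤ LinearMap.ker B.mulVecLin) := by
  by_cases hcommon : ∃ u ≠ 0, A *ᵥ u = 0 ∧ B *ᵥ u = 0
  · obtain ⟨u, hu, hAu, hBu⟩ := hcommon
    right
    refine ⟨K ∙ u, finrank_span_singleton hu, ?_, ?_⟩ <;>
      rw [span_singleton_le_iff_mem, LinearMap.mem_ker, mulVecLin_apply] <;> assumption
  push Not at hcommon
  obtain ⟨u, hu, hAu⟩ := exists_mulVec_eq_zero_iff.mpr hA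
  obtain ⟨v, hv, hBv⟩ := exists_mulVec_eq_zero_iff.mpr hB
  have hBu : B *ᵥ u ≠ 0 := hcommon u hu hAu
  have hAv : A *ᵥ v ≠ 0 := fun h => hcommon v hv h hBv
  have hparallel : cross (A *ᵥ v) (B *ᵥ u) = 0 := by
    have hv' : (A + B) *ᵥ v = A *ᵥ v := by rw [add_mulVec, hBv, add_zero]
    have hu' : (A + B) *ᵥ u = B *ᵥ u := by rw [add_mulVec, hAu, zero_add]
    rw [← hv', ← hu', cross_mulVec, hAB, zero_mul]
  left
  refine ⟨K ∙ (A *ᵥ v), finrank_span_singleton hAv,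
    range_mulVecLin_le_span_of_det_eq_zero hA hAv, ?_⟩
  refine (range_mulVecLin_le_span_of_det_eq_zero hB hBu).trans ?_
  exact span_singleton_le_iff_mem _ _ |>.mpr (mem_span_singleton_of_cross_eq_zero hAv hparallel)

end Line

lemma Submodule.exists_smul_add_smul_of_finrank_eq_two {K M : Type*} [DivisionRing K]
    [AddCommGroup M] [Module K M] {V : Submodule K M} (hV : finrank K V = 2) :
    ∃ A ∈ V, ∃ B ∈ V, ∀ C ∈ V, ∃ s t : K, C = s • A + t • B := by
  have := Module.finite_of_finrank_eq_succ hV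
  let b := finBasisOfFinrankEq K V hV
  refine ⟨b 0, (b 0).2, b 1, (b 1).2, fun C hC => ⟨b.repr ⟨C, hC⟩ 0, b.repr ⟨C, hC⟩ 1, ?_⟩⟩
  simpa only [Fin.sum_univ_two, coe_add, coe_smul] using
    congrArg Subtype.val (b.sum_repr ⟨C, hC⟩).symm

theorem stmt_10_general (V : Submodule ℝ (Matrix (Fin 2) (Fin 2) ℝ))
    (hdim : Module.finrank ℝ V = 2)
    (hdet : ∀ A ∈ V, A.det = 0) :
    (∃ L : Submodule ℝ (Fin 2 → ℝ), Module.finrank ℝ L = 1 ∧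
        ∀ A ∈ V, LinearMap.range A.mulVecLin ≤ L) ∨
    (∃ L : Submodule ℝ (Fin 2 → ℝ), Module.finrank ℝ L = 1 ∧
        ∀ A ∈ V, L ≤ LinearMap.ker A.mulVecLin) := by
  obtain ⟨A, hA, B, hB, hspan⟩ := exists_smul_add_smul_of_finrank_eq_two hdim
  rcases ranges_le_line_or_line_le_kers (hdet A hA) (hdet B hB) (hdet _ (V.add_mem hA hB)) with
    ⟨L, hL, hAL, hBL⟩ | ⟨L, hL, hLA, hLB⟩
  · refine .inl ⟨L, hL, fun C hC => ?_⟩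
    obtain ⟨s, t, rfl⟩ := hspan C hC
    rintro _ ⟨x, rfl⟩
    simp only [mulVecLin_apply, add_mulVec, smul_mulVec]
    exact L.add_mem (L.smul_mem s (hAL ⟨x, rfl⟩)) (L.smul_mem t (hBL ⟨x, rfl⟩))
  · refine .inr ⟨L, hL, fun C hC x hx => ?_⟩
    obtain ⟨s, t, rfl⟩ := hspan C hC
    have hAx : A *ᵥ x = 0 := hLA hx
    have hBx : B *ᵥ x = 0 := hLB hx
    simp [hAx, hBx]

/-- A 2-dimensional totally isotropic subspace of `(M₂(ℝ), det)` consists either of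
matrices with image in a fixed line, or of matrices whose kernel contains a fixed line. -/
theorem stmt_10 (V : Submodule ℝ (Matrix (Fin 2) (Fin 2) ℝ))
    (hdim : Module.finrank ℝ V = 2)
    (hiso : ∀ A ∈ V, ∀ A' ∈ V, ((A + A').det - A.det - A'.det) / 2 = 0)
    (hdet : ∀ A ∈ V, A.det = 0) :
    (∃ L : Submodule ℝ (Fin 2 → ℝ), Module.finrank ℝ L = 1 ∧
        ∀ A ∈ V, LinearMap.range A.mulVecLin ≤ L) ∨
    (∃ L : Submodule ℝ (Fin 2 → ℝ), Module.finrank ℝ L = 1 ∧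
        ∀ A ∈ V, L ≤ LinearMap.ker A.mulVecLin) :=
  stmt_10_general V hdim hdet
end

section
/- Let u ↦ A(u) be a family of 2×2 real matrices indexed by u in a set D with at least two elements, such that det(A(u) - A(v)) = 0 for all u ≠ v, det(A(u)) = 0 for all u, and not all A(u) are zero. Then either there is a fixed line L ⊆ ℝ² containing the image of every A(u), or there is a fixed line L ⊆ ℝ² contained in the kernel of every A(u). -/
open Matrix

private def cr (x y : Fin 2 → ℝ) : ℝ := x 0 * y 1 - x 1 * y 0

private lemma ne_zero_iff' (x : Fin 2 → ℝ) : x ≠ 0 ↔ x 0 ≠ 0 ∨ x 1 ≠ 0 := by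
  constructor
  · intro h
    by_contra hc
    push_neg at hc
    exact h (funext fun i => by fin_cases i <;> simp [hc.1, hc.2])
  · rintro (h | h) rfl <;> simp at h

private lemma parallel_of_cr {x y : Fin 2 → ℝ} (hx : x ≠ 0) (h : cr x y = 0) :
    ∃ t : ℝ, y = t • x := by
  unfold cr at h
  rcases (ne_zero_iff' x).1 hx with h0 | h0
  · refine ⟨y 0 / x 0, funext fun i => ?_⟩
    fin_cases i <;> simp <;> field_simp <;> linarith
  · refine ⟨y 1 / x 1, funext fun i => ?_⟩
    fin_cases i <;> simp <;> field_simp <;> linarith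

private lemma decomp (M : Matrix (Fin 2) (Fin 2) ℝ) (hd : M.det = 0) (hM : M ≠ 0) :
    ∃ x y : Fin 2 → ℝ, x ≠ 0 ∧ y ≠ 0 ∧ M = vecMulVec x y := by
  rw [Matrix.det_fin_two] at hd
  by_cases h00 : M 0 0 ≠ 0
  · refine ⟨![M 0 0, M 1 0], ![1, M 0 1 / M 0 0], ?_, ?_, ?_⟩
    · rw [ne_zero_iff']; left; simpa using h00
    · rw [ne_zero_iff']; left; norm_num
    · ext i j
      fin_cases i <;> fin_cases j <;> simp [vecMulVec_apply] <;> field_simp <;> linarith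
  · push_neg at h00
    have h2 : M 0 1 * M 1 0 = 0 := by rw [h00] at hd; linarith
    rcases mul_eq_zero.1 h2 with h01 | h10
    · refine ⟨![0, 1], ![M 1 0, M 1 1], ?_, ?_, ?_⟩
      · rw [ne_zero_iff']; right; norm_num
      · rw [ne_zero_iff']
        by_contra hc
        push_neg at hc
        simp at hc
        exact hM (by ext i j; fin_cases i <;> fin_cases j <;>
          simp [h00, h01, hc.1, hc.2])
      · ext i j; fin_cases i <;> fin_cases j <;> simp [vecMulVec_apply, h00, h01]
    · refine ⟨![M 0 1, M 1 1], ![0, 1], ?_, ?_, ?_⟩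
      · rw [ne_zero_iff']
        by_contra hc
        push_neg at hc
        simp at hc
        exact hM (by ext i j; fin_cases i <;> fin_cases j <;>
          simp [h00, h10, hc.1, hc.2])
      · rw [ne_zero_iff']; right; norm_num
      · ext i j; fin_cases i <;> fin_cases j <;> simp [vecMulVec_apply, h00, h10]

private lemma det_sub_vmv (x y a b : Fin 2 → ℝ) :
    (vecMulVec x y - vecMulVec a b).det = -(cr x a * cr y b) := by
  simp [Matrix.det_fin_two, vecMulVec_apply, cr]; ring

private lemma mulVec_vmv (x y w : Fin 2 → ℝ) :
    (vecMulVec x y).mulVec w = (y ⬝ᵥ w) • x := by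
  funext i
  simp [Matrix.mulVec, vecMulVec_apply, dotProduct, Fin.sum_univ_two]
  ring

/-- Theorem 2: a family of singular 2×2 matrices, not all zero, with all pairwise
differences singular, consists either of matrices with a fixed 1-dimensional image or
with a fixed 1-dimensional kernel. -/
theorem stmt_11 (D : Type*) (A : D → Matrix (Fin 2) (Fin 2) ℝ)
    (hcard : ∃ u v : D, u ≠ v)
    (hdiff : ∀ u v : D, u ≠ v → (A u - A v).det = 0)
    (hdet : ∀ u : D, (A u).det = 0)
    (hnz : ∃ u : D, A u ≠ 0) :
    (∃ L : Submodule ℝ (Fin 2 → ℝ), Module.finrank ℝ L = 1 ∧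
        ∀ u : D, LinearMap.range (A u).mulVecLin ≤ L) ∨
    (∃ L : Submodule ℝ (Fin 2 → ℝ), Module.finrank ℝ L = 1 ∧
        ∀ u : D, L ≤ LinearMap.ker (A u).mulVecLin) := by
  have key : ∀ u v (xu yu xv yv : Fin 2 → ℝ), A u = vecMulVec xu yu →
      A v = vecMulVec xv yv → cr xu xv = 0 ∨ cr yu yv = 0 := by
    intro u v xu yu xv yv hu hv
    have hd : (A u - A v).det = 0 := by
      by_cases h : u = v
      · subst h; simp
      · exact hdiff u v h
    rw [hu, hv, det_sub_vmv, neg_eq_zero] at hd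
    exact mul_eq_zero.1 hd
  obtain ⟨u₀, hu₀⟩ := hnz
  obtain ⟨x₀, y₀, hx₀, hy₀, hA₀⟩ := decomp _ (hdet u₀) hu₀
  by_cases hker : ∀ w (xw yw : Fin 2 → ℝ), xw ≠ 0 → yw ≠ 0 →
      A w = vecMulVec xw yw → cr y₀ yw = 0
  · right
    have hJ0 : (![y₀ 1, -y₀ 0] : Fin 2 → ℝ) ≠ 0 := by
      rw [ne_zero_iff']
      rcases (ne_zero_iff' y₀).1 hy₀ with h | h
      · right; simpa using h
      · left; simpa using h
    refine ⟨Submodule.span ℝ {![y₀ 1, -y₀ 0]}, finrank_span_singleton hJ0, ?_⟩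
    intro u
    rw [Submodule.span_le, Set.singleton_subset_iff, SetLike.mem_coe,
      LinearMap.mem_ker, Matrix.mulVecLin_apply]
    by_cases h : A u = 0
    · simp [h]
    · obtain ⟨x, y, hx, hy, hA⟩ := decomp _ (hdet u) h
      obtain ⟨t, rfl⟩ := parallel_of_cr hy₀ (hker u x y hx hy hA)
      rw [hA, mulVec_vmv]
      have hz : (t • y₀) ⬝ᵥ ![y₀ 1, -y₀ 0] = 0 := by
        simp [dotProduct, Fin.sum_univ_two]; ring
      rw [hz, zero_smul]
  · left
    push_neg at hker
    obtain ⟨w, xw, yw, hxw, hyw, hAw, hcw⟩ := hker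
    have hxx : cr x₀ xw = 0 := (key u₀ w x₀ y₀ xw yw hA₀ hAw).resolve_right hcw
    refine ⟨Submodule.span ℝ {x₀}, finrank_span_singleton hx₀, ?_⟩
    intro u z hz
    rw [LinearMap.mem_range] at hz
    obtain ⟨v, rfl⟩ := hz
    rw [Matrix.mulVecLin_apply]
    by_cases h : A u = 0
    · simp [h]
    · obtain ⟨x, y, hx, hy, hA⟩ := decomp _ (hdet u) h
      have hxpar : ∃ s : ℝ, x = s • x₀ := by
        by_cases hcy : cr y₀ y = 0
        · obtain ⟨t, hty⟩ := parallel_of_cr hy₀ hcy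
          have ht : t ≠ 0 := by rintro rfl; rw [zero_smul] at hty; exact hy hty
          have hyy : cr yw y ≠ 0 := by
            rw [hty]
            have : cr yw (t • y₀) = -(t * cr y₀ yw) := by unfold cr; simp; ring
            rw [this, neg_ne_zero]
            exact mul_ne_zero ht hcw
          have h2 : cr xw x = 0 := (key w u xw yw x y hAw hA).resolve_right hyy
          obtain ⟨s', hs'⟩ := parallel_of_cr hxw h2
          obtain ⟨s'', hs''⟩ := parallel_of_cr hx₀ hxx
          exact ⟨s' * s'', by rw [hs', hs'', smul_smul]⟩
        · exact parallel_of_cr hx₀ ((key u₀ u x₀ y₀ x y hA₀ hA).resolve_right hcy)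
      obtain ⟨s, hs⟩ := hxpar
      rw [hA, mulVec_vmv, hs]
      exact Submodule.mem_span_singleton.2 ⟨(y ⬝ᵥ v) * s, (smul_smul _ _ _).symm⟩
end

section
/- There is no C² map f : U → ℝⁿ defined on a nonempty open set U ⊆ ℝⁿ such that for all distinct u, v ∈ U, the tangent affine subspaces to the graph of f at (u, f(u)) and (v, f(v)) are disjoint in ℝ^(2n). Equivalently: for any C² map f : U → ℝⁿ with U nonempty open, there exist distinct u, v ∈ U such that Df(u)·u - f(u) - (Df(v)·v - f(v)) lies in the image of Df(u) - Df(v). -/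
/-!
Write `A = Df` and `b u = A u u - f u`. By the symmetry of the second derivative,
`Db(u) = D²f(u) u`.

If `D²f(u) u` is invertible for some `u`, then so is the difference quotient
`(A (u + t • u) - A u) / t` for small `t ≠ 0`; hence `A v - A u` is onto for `v = u + t • u`,
and `b v - b u` lies in its image.

Otherwise `Db` is nowhere injective, and such a `C¹` map is never injective: at a point `a`
where the rank of `Db` is maximal, the rank stays constant nearby, so projecting onto the range
of `Db(a)` loses no information on derivatives; by the implicit function theorem the projected
map has a level curve through `a`, along which `b` itself is then constant. Two points `u ≠ v`
with `b u = b v` work with `x = 0`.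
-/

open Module Function Set Filter Topology

theorem LinearMap.ker_comp_eq_of_surjective_of_finrank_le {K V W X : Type*} [Field K]
    [AddCommGroup V] [Module K V] [AddCommGroup W] [Module K W] [AddCommGroup X] [Module K X]
    [FiniteDimensional K V] [FiniteDimensional K X] {T : V →ₗ[K] W} {p : W →ₗ[K] X}
    (hsurj : Surjective (p ∘ₗ T)) (hrank : finrank K (range T) ≤ finrank K X) :
    ker (p ∘ₗ T) = ker T := by
  set q : range T →ₗ[K] X := p.domRestrict (range T)
  have hq : Surjective q := fun x ↦ by
    obtain ⟨v, rfl⟩ := hsurj x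
    exact ⟨⟨T v, mem_range_self T v⟩, rfl⟩
  have hq' : Injective q := by
    refine (injective_iff_surjective_of_finrank_eq_finrank (le_antisymm hrank ?_)).mpr hq
    have := q.finrank_range_le
    rwa [range_eq_top.mpr hq, finrank_top] at this
  refine le_antisymm (fun v hv ↦ ?_) (ker_le_ker_comp T p)
  have : q ⟨T v, mem_range_self T v⟩ = q 0 := by simpa [q] using hv
  simpa using congrArg Subtype.val (hq' this)

section

variable {𝕜 : Type*} [RCLike 𝕜]
  {E F G : Type*} [NormedAddCommGroup E] [NormedSpace 𝕜 E]
  [NormedAddCommGroup F] [NormedSpace 𝕜 F] [NormedAddCommGroup G] [NormedSpace 𝕜 G]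

theorem ContinuousLinearMap.isInvertible_of_bijective [FiniteDimensional 𝕜 E] {T : E →L[𝕜] F}
    (hT : Bijective T) : T.IsInvertible :=
  ⟨(LinearEquiv.ofBijective (T : E →ₗ[𝕜] F) hT).toContinuousLinearEquiv, rfl⟩

theorem ContinuousLinearMap.isInvertible_comp_subtypeL_of_isCompl [FiniteDimensional 𝕜 E]
    {D : E →L[𝕜] F} (hD : Surjective D) {C : Submodule 𝕜 E} (hC : IsCompl D.ker C) :
    (D ∘L C.subtypeL).IsInvertible := by
  refine isInvertible_of_bijective ⟨fun x y hxy ↦ ?_, fun z ↦ ?_⟩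
  · have hmem : (x - y : E) ∈ D.ker := by simpa [sub_eq_zero] using hxy
    simpa [sub_eq_zero] using Submodule.disjoint_def.mp hC.disjoint _ hmem (x - y).2
  · obtain ⟨e, rfl⟩ := hD z
    obtain ⟨k, c, hk, hc, rfl⟩ := Submodule.codisjoint_iff_exists_add_eq.mp hC.codisjoint e
    exact ⟨⟨c, hc⟩, by simpa using hk⟩

theorem ContinuousAt.eventually_surjective {X : Type*} [TopologicalSpace X] [FiniteDimensional 𝕜 E]
    {M : X → E →L[𝕜] F} {a : X} (hM : ContinuousAt M a)
    (ha : Surjective (M a)) : ∀ᶠ u in 𝓝 a, Surjective (M u) := by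
  obtain ⟨C, hC⟩ := (M a).ker.exists_isCompl
  have hcont : ContinuousAt (fun u ↦ M u ∘L C.subtypeL) a :=
    ((ContinuousLinearMap.compL 𝕜 C E F).flip C.subtypeL).continuous.continuousAt.comp hM
  filter_upwards [hcont.eventually_mem (ContinuousLinearEquiv.isOpen.mem_nhds
    (ContinuousLinearMap.isInvertible_comp_subtypeL_of_isCompl ha hC))] with u ⟨e, he⟩ z
  obtain ⟨c, hc⟩ := e.surjective z
  rw [← ContinuousLinearEquiv.coe_coe, he] at hc
  exact ⟨c, hc⟩

theorem eventually_eq_of_eventually_hasFDerivAt_zero {φ : E → F} {x₀ : E}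
    (h : ∀ᶠ x in 𝓝 x₀, HasFDerivAt φ (0 : E →L[𝕜] F) x) : ∀ᶠ x in 𝓝 x₀, φ x = φ x₀ := by
  let _ := NormedSpace.restrictScalars ℝ 𝕜 E
  obtain ⟨ε, hε, hball⟩ := Metric.eventually_nhds_iff_ball.mp h
  filter_upwards [Metric.ball_mem_nhds x₀ hε] with x hx
  exact Metric.isOpen_ball.is_const_of_fderiv_eq_zero (convex_ball x₀ ε).isPreconnected
    (fun y hy ↦ (hball y hy).differentiableAt.differentiableWithinAt)
    (fun y hy ↦ (hball y hy).fderiv) hx (Metric.mem_ball_self hε)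

theorem eventually_eq_of_eventually_clm_comp_eq {h : E → F} {h' : E → E →L[𝕜] F}
    {π : F →L[𝕜] G} {x₀ : E} (hh : ∀ᶠ x in 𝓝 x₀, HasFDerivAt h (h' x) x)
    (hker : ∀ᶠ x in 𝓝 x₀, ∀ v, π (h' x v) = 0 → h' x v = 0)
    (hπ : ∀ᶠ x in 𝓝 x₀, π (h x) = π (h x₀)) : ∀ᶠ x in 𝓝 x₀, h x = h x₀ := by
  refine eventually_eq_of_eventually_hasFDerivAt_zero (𝕜 := 𝕜) ?_
  filter_upwards [hh, hker, hπ.eventually_nhds] with x hx hxker hxπ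
  have hπh : π ∘L h' x = 0 :=
    (π.hasFDerivAt.comp x hx).unique ((hasFDerivAt_const (π (h x₀)) x).congr_of_eventuallyEq hxπ)
  convert hx using 1
  ext v
  exact (hxker v (by simpa using congrArg (· v) hπh)).symm

theorem ContDiffAt.exists_ker_param_level_set [FiniteDimensional 𝕜 E] [CompleteSpace F]
    {φ : E → F} {a : E} (hφ : ContDiffAt 𝕜 1 φ a) (hD : Surjective (fderiv 𝕜 φ a)) :
    ∃ γ : (fderiv 𝕜 φ a).ker → E, γ 0 = a ∧ ContDiffAt 𝕜 1 γ 0 ∧ (∀ x, γ x = a → x = 0) ∧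
      ∀ᶠ x in 𝓝 0, φ (γ x) = φ a := by
  set D := fderiv 𝕜 φ a
  obtain ⟨C, hC⟩ := D.ker.exists_isCompl
  set L : D.ker × C →L[𝕜] E := D.ker.subtypeL.coprod C.subtypeL
  set Φ : D.ker × C → F := fun z ↦ φ (a + L z)
  have hφ₀ : ContDiffAt 𝕜 1 φ (a + L 0) := by simpa using hφ
  have hΦ : ContDiffAt 𝕜 1 Φ 0 := hφ₀.comp 0 (contDiffAt_const.add L.contDiff.contDiffAt)
  have hΦ' : fderiv 𝕜 Φ 0 ∘L .inr 𝕜 _ _ = D ∘L C.subtypeL := by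
    have := ((hφ₀.differentiableAt one_ne_zero).hasFDerivAt.comp (0 : D.ker × C)
      (L.hasFDerivAt.const_add a)).fderiv
    rw [show Φ = φ ∘ fun z ↦ a + L z from rfl, this]
    ext c
    simp [L, D]
  have hinv : (fderiv 𝕜 Φ 0 ∘L .inr 𝕜 _ _).IsInvertible :=
    hΦ' ▸ ContinuousLinearMap.isInvertible_comp_subtypeL_of_isCompl hD hC
  set ψ := hΦ.implicitFunction one_ne_zero hinv
  have hψ₀ : ψ 0 = 0 := hΦ.implicitFunction_apply_self one_ne_zero hinv
  refine ⟨fun x ↦ a + L (x, ψ x), by simp [hψ₀, L], ?_, fun x hx ↦ ?_, ?_⟩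
  · exact contDiffAt_const.add (L.contDiff.contDiffAt.comp 0
      (contDiffAt_id.prodMk (hΦ.contDiffAt_implicitFunction one_ne_zero hinv)))
  · have hsum : (x : E) + ψ x = 0 := by simpa [L] using hx
    have hxC : (x : E) ∈ C := by
      rw [eq_neg_of_add_eq_zero_left hsum]
      exact C.neg_mem (ψ x).2
    simpa using Submodule.disjoint_def.mp hC.disjoint _ x.2 hxC
  · simpa [Φ] using hΦ.eventually_apply_implicitFunction one_ne_zero hinv

theorem ContDiffAt.eventually_fderiv_eq_zero_of_clm_apply_eq_zero [FiniteDimensional 𝕜 E]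
    [FiniteDimensional 𝕜 G] {g : E → F} {a : E} (hg : ContDiffAt 𝕜 1 g a) {π : F →L[𝕜] G}
    (hπ : Surjective (π ∘L fderiv 𝕜 g a))
    (hrank : ∀ᶠ u in 𝓝 a, finrank 𝕜 (fderiv 𝕜 g u).range ≤ finrank 𝕜 G) :
    ∀ᶠ u in 𝓝 a, ∀ w, π (fderiv 𝕜 g u w) = 0 → fderiv 𝕜 g u w = 0 := by
  have hcont : ContinuousAt (fun u ↦ π ∘L fderiv 𝕜 g u) a :=
    (ContinuousLinearMap.compL 𝕜 E F G π).continuous.continuousAt.comp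
      (hg.fderiv_right (m := 0) le_rfl).continuousAt
  filter_upwards [hcont.eventually_surjective hπ, hrank] with u hu hur w hw
  have hker := LinearMap.ker_comp_eq_of_surjective_of_finrank_le
    (T := (fderiv 𝕜 g u : E →ₗ[𝕜] F)) (p := (π : F →ₗ[𝕜] G)) hu hur
  exact LinearMap.mem_ker.mp (hker ▸ LinearMap.mem_ker.mpr hw)

theorem ContDiffAt.not_injOn_of_eventually_finrank_range_fderiv_le [FiniteDimensional 𝕜 E]
    {g : E → F} {a : E} (hg : ContDiffAt 𝕜 1 g a)
    (hrank : ∀ᶠ u in 𝓝 a, finrank 𝕜 (fderiv 𝕜 g u).range ≤ finrank 𝕜 (fderiv 𝕜 g a).range)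
    (hker : ¬ Injective (fderiv 𝕜 g a)) {s : Set E} (hs : s ∈ 𝓝 a) : ¬ InjOn g s := by
  intro hinj
  set T := fderiv 𝕜 g a
  obtain ⟨π, hπ⟩ := Submodule.ClosedComplemented.of_finiteDimensional T.range
  have hπT : Surjective (π ∘L T) := by
    rintro ⟨_, e, rfl⟩
    exact ⟨e, by simpa using hπ ⟨T e, e, rfl⟩⟩
  have hφ' : fderiv 𝕜 (π ∘ g) a = π ∘L T :=
    (π.hasFDerivAt.comp a (hg.differentiableAt one_ne_zero).hasFDerivAt).fderiv
  obtain ⟨γ, hγ0, hγ, hγinj, hlevel⟩ :=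
    (π.contDiff.contDiffAt.comp a hg).exists_ker_param_level_set (hφ' ▸ hπT)
  have : Nontrivial (fderiv 𝕜 (π ∘ g) a).ker := by
    obtain ⟨v, w, hTvw, hvw⟩ := not_injective_iff.mp hker
    refine ⟨⟨v - w, ?_⟩, 0, ?_⟩
    · simp [hφ', T, hTvw]
    · simpa [sub_eq_zero] using hvw
  have := Module.punctured_nhds_neBot 𝕜 (fderiv 𝕜 (π ∘ g) a).ker 0
  have hγa : Tendsto γ (𝓝 0) (𝓝 a) := by simpa [hγ0] using hγ.continuousAt.tendsto
  have hconst : ∀ᶠ x in 𝓝 0, g (γ x) = g a := by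
    have := eventually_eq_of_eventually_clm_comp_eq (h := g ∘ γ)
      (h' := fun x ↦ fderiv 𝕜 g (γ x) ∘L fderiv 𝕜 γ x) (π := π) (x₀ := 0) ?_ ?_
      (by simpa [hγ0] using hlevel)
    · simpa [hγ0] using this
    · filter_upwards [hγ.eventually (by simp), hγa.eventually (hg.eventually (by simp))]
        with x hγx hgx
      exact (hgx.differentiableAt one_ne_zero).hasFDerivAt.comp x
        (hγx.differentiableAt one_ne_zero).hasFDerivAt
    · filter_upwards [hγa.eventually (hg.eventually_fderiv_eq_zero_of_clm_apply_eq_zero hπT hrank)]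
        with x hx v
      exact hx _
  obtain ⟨x, ⟨hgx, hxs⟩, hx0⟩ :=
    (((hconst.and (hγa.eventually hs)).filter_mono nhdsWithin_le_nhds).and
      (eventually_mem_nhdsWithin (s := {0}ᶜ))).exists
  exact hx0 (hγinj x (hinj hxs (mem_of_mem_nhds hs) hgx))

theorem not_injOn_of_forall_not_injective_fderiv [FiniteDimensional 𝕜 E]
    {g : E → F} {V : Set E} (hV : IsOpen V) (hne : V.Nonempty) (hg : ContDiffOn 𝕜 1 g V)
    (hsing : ∀ u ∈ V, ¬ Injective (fderiv 𝕜 g u)) : ¬ InjOn g V := by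
  set rk : E → ℕ := fun u ↦ finrank 𝕜 (fderiv 𝕜 g u).range
  have hfin : (rk '' V).Finite :=
    (Set.finite_le_nat (finrank 𝕜 E)).subset <| by
      rintro _ ⟨u, -, rfl⟩
      exact LinearMap.finrank_range_le _
  obtain ⟨_, ⟨a, haV, rfl⟩, hmax⟩ := Set.exists_max_image _ id hfin (hne.image rk)
  refine (hg.contDiffAt (hV.mem_nhds haV)).not_injOn_of_eventually_finrank_range_fderiv_le ?_
    (hsing a haV) (hV.mem_nhds haV)
  filter_upwards [hV.mem_nhds haV] with u hu using hmax _ ⟨u, hu, rfl⟩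

theorem hasFDerivAt_apply_self_sub {f : E → F} {f' : E → E →L[𝕜] F}
    {f'' : E →L[𝕜] E →L[𝕜] F} {x : E} (hf : ∀ᶠ y in 𝓝 x, HasFDerivAt f (f' y) y)
    (hf' : HasFDerivAt f' f'' x) : HasFDerivAt (fun y ↦ f' y y - f y) (f'' x) x := by
  refine ((hf'.clm_apply (hasFDerivAt_id x)).sub hf.self_of_nhds).congr_fderiv ?_
  ext v
  simp [second_derivative_symmetric_of_eventually hf hf' v x]

theorem HasFDerivAt.frequently_surjective_sub [CompleteSpace F] {c : E → F →L[𝕜] G}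
    {c' : E →L[𝕜] F →L[𝕜] G} {u h : E} (hc : HasFDerivAt c c' u) (hh : (c' h).IsInvertible)
    (hh0 : h ≠ 0) : ∃ᶠ v in 𝓝[≠] u, Surjective (c v - c u) := by
  have hl : HasDerivAt (fun t : 𝕜 ↦ u + t • h) h 0 := by
    simpa using ((hasDerivAt_id (0 : 𝕜)).smul_const h).const_add u
  have hline : Tendsto (fun t : 𝕜 ↦ u + t • h) (𝓝[≠] 0) (𝓝[≠] u) := by
    refine tendsto_nhdsWithin_of_tendsto_nhds_of_eventually_within _
      (by simpa using hl.continuousAt.tendsto.mono_left nhdsWithin_le_nhds) ?_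
    filter_upwards [self_mem_nhdsWithin] with t ht
    simpa [hh0] using ht
  refine hline.frequently (Eventually.frequently ?_)
  have hslope := hasDerivAt_iff_tendsto_slope.mp (hc.comp_hasDerivAt_of_eq 0 hl (by simp))
  filter_upwards [hslope.eventually (ContinuousLinearEquiv.isOpen.mem_nhds hh),
    self_mem_nhdsWithin] with t ⟨e, he⟩ ht0 y
  obtain ⟨x, hx⟩ := e.surjective (t⁻¹ • y)
  refine ⟨x, ?_⟩
  rw [← ContinuousLinearEquiv.coe_coe, he, slope_def_module] at hx
  have ht0 : t⁻¹ ≠ 0 := inv_ne_zero ht0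
  simpa [smul_right_inj ht0] using hx

end

/-- Theorem 1: no C²-smooth T-embedded n-disc in ℝ^(2n). For any C² map
`f : U → ℝⁿ` on a nonempty open `U ⊆ ℝⁿ` (n ≥ 1), there are distinct `u, v ∈ U`
whose tangent affine subspaces to the graph intersect; equivalently,
`b(u) - b(v) ∈ Im (A(u) - A(v))` where `A = Df` and `b(u) = Df(u)·u - f(u)`. -/
theorem stmt_14 (n : ℕ) (hn : 1 ≤ n) (U : Set (Fin n → ℝ)) (hU : IsOpen U)
    (hne : U.Nonempty) (f : (Fin n → ℝ) → (Fin n → ℝ)) (hf : ContDiffOn ℝ 2 f U) :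
    ∃ u ∈ U, ∃ v ∈ U, u ≠ v ∧
      ∃ x : Fin n → ℝ, (fderiv ℝ f u - fderiv ℝ f v) x =
        (fderiv ℝ f u u - f u) - (fderiv ℝ f v v - f v) := by
  set b := fun u ↦ fderiv ℝ f u u - f u
  have hA : ContDiffOn ℝ 1 (fderiv ℝ f) U := hf.fderiv_of_isOpen hU (by norm_num)
  have hdA : ∀ u ∈ U, HasFDerivAt (fderiv ℝ f) (fderiv ℝ (fderiv ℝ f) u) u := fun u hu ↦
    ((hA.contDiffAt (hU.mem_nhds hu)).differentiableAt one_ne_zero).hasFDerivAt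
  have hdb : ∀ u ∈ U, HasFDerivAt b (fderiv ℝ (fderiv ℝ f) u u) u := fun u hu ↦
    hasFDerivAt_apply_self_sub ((hU.eventually_mem hu).mono fun y hy ↦
      ((hf.contDiffAt (hU.mem_nhds hy)).differentiableAt two_ne_zero).hasFDerivAt) (hdA u hu)
  by_cases h : ∃ u ∈ U, Injective (fderiv ℝ (fderiv ℝ f) u u)
  · obtain ⟨u, hu, hinj⟩ := h
    have : Nonempty (Fin n) := ⟨⟨0, hn⟩⟩
    have hu0 : u ≠ 0 := by
      rintro rfl
      obtain ⟨w, hw⟩ := exists_ne (0 : Fin n → ℝ)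
      exact hw (hinj (by simp))
    have hinv := ContinuousLinearMap.isInvertible_of_bijective
      ⟨hinj, LinearMap.injective_iff_surjective.mp hinj⟩
    obtain ⟨v, hsurj, hvU, hvu⟩ := ((hdA u hu).frequently_surjective_sub hinv hu0).and_eventually
      (inter_mem (mem_nhdsWithin_of_mem_nhds (hU.mem_nhds hu)) self_mem_nhdsWithin) |>.exists
    obtain ⟨x, hx⟩ := hsurj (b v - b u)
    exact ⟨v, hvU, u, hu, hvu, x, hx⟩
  · push Not at h
    have hb : ContDiffOn ℝ 1 b U := (hA.clm_apply contDiffOn_id).sub (hf.of_le one_le_two)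
    have := not_injOn_of_forall_not_injective_fderiv hU hne hb fun u hu ↦
      (hdb u hu).fderiv ▸ h u hu
    simp only [InjOn, not_forall] at this
    obtain ⟨u, hu, v, hv, hbuv, huv⟩ := this
    exact ⟨u, hu, v, hv, huv, 0, by rw [map_zero, eq_comm, sub_eq_zero]; exact hbuv⟩
end

section
/- Let f : U → ℝⁿ be C² on open U ⊆ ℝⁿ with the property that A(u) - A(v) is singular for all u, v ∈ U, where A(u) = Df(u). Define b(u) = A(u)·u - f(u). Then for every u ∈ U such that the segment {(1+ε)u : 0 ≤ ε ≤ ε₀} lies in U for some ε₀ > 0, the derivative Db(u) is a limit of the singular matrices (A(u + εu) - A(u))/ε as ε → 0⁺, hence Db(u) is singular. -/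
/-!
Differentiating `b(y) = Df(y) y - f(y)` gives `Db(u) v = D²f(u)(v, u) + Df(u) v - Df(u) v`, which by
symmetry of the second derivative is `D²f(u)(u, v)`, i.e. `Db(u) = D²f(u) u`: the derivative of
`A = Df` along the ray through `u`. Hence `Db(u)` is the limit of the difference quotients
`ε⁻¹ (A(u + εu) - A(u))`, which are singular by hypothesis, and singularity is a closed condition.
-/

open Filter Topology

section

variable {E F : Type*} [NormedAddCommGroup E] [NormedSpace ℝ E]
  [NormedAddCommGroup F] [NormedSpace ℝ F]

theorem hasFDerivAt_fderiv_apply_self_sub {f : E → F} {f'' : E →L[ℝ] E →L[ℝ] F} {x : E}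
    (hf : ∀ᶠ y in 𝓝 x, DifferentiableAt ℝ f y) (hf'' : HasFDerivAt (fderiv ℝ f) f'' x) :
    HasFDerivAt (fun y => fderiv ℝ f y y - f y) (f'' x) x := by
  have hf' : ∀ᶠ y in 𝓝 x, HasFDerivAt f (fderiv ℝ f y) y :=
    hf.mono fun y hy => hy.hasFDerivAt
  have hsymm : ∀ v w, f'' v w = f'' w v :=
    second_derivative_symmetric_of_eventually_of_real hf' hf''
  refine ((hf''.clm_apply (hasFDerivAt_id x)).sub hf'.self_of_nhds).congr_fderiv ?_
  ext v
  simp [hsymm x v]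

theorem HasFDerivAt.tendsto_smul_sub_along {g : E → F} {g' : E →L[ℝ] F} {x : E}
    (hg : HasFDerivAt g g' x) (v : E) :
    Tendsto (fun t : ℝ => t⁻¹ • (g (x + t • v) - g x)) (𝓝[≠] 0) (𝓝 (g' v)) := by
  have hline : HasDerivAt (fun t : ℝ => x + t • v) v 0 := by
    simpa using ((hasDerivAt_id (0 : ℝ)).smul_const v).const_add x
  have hcomp : HasDerivAt (fun t : ℝ => g (x + t • v)) (g' v) 0 :=
    (by simpa using hg : HasFDerivAt g g' (x + (0 : ℝ) • v)).comp_hasDerivAt 0 hline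
  refine (hasDerivAt_iff_tendsto_slope.mp hcomp).congr fun t => ?_
  simp [slope_def_module]

end

theorem LinearMap.det_eq_zero_of_tendsto {E ι : Type*} [NormedAddCommGroup E]
    [NormedSpace ℝ E] [FiniteDimensional ℝ E] {l : Filter ι} [l.NeBot]
    {M : ι → E →L[ℝ] E} {M₀ : E →L[ℝ] E} (hM : Tendsto M l (𝓝 M₀))
    (hsing : ∀ᶠ i in l, LinearMap.det (M i : E →ₗ[ℝ] E) = 0) :
    LinearMap.det (M₀ : E →ₗ[ℝ] E) = 0 :=
  (isClosed_singleton.preimage ContinuousLinearMap.continuous_det).mem_of_tendsto hM hsing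

theorem stmt_15_general (n : ℕ) (U : Set (Fin n → ℝ)) (hU : IsOpen U)
    (f : (Fin n → ℝ) → (Fin n → ℝ)) (hf : ContDiffOn ℝ 2 f U)
    (hsing : ∀ u ∈ U, ∀ v ∈ U,
      LinearMap.det ((fderiv ℝ f u - fderiv ℝ f v :
        (Fin n → ℝ) →L[ℝ] (Fin n → ℝ)) : (Fin n → ℝ) →ₗ[ℝ] (Fin n → ℝ)) = 0)
    (b : (Fin n → ℝ) → (Fin n → ℝ)) (hb : ∀ u, b u = fderiv ℝ f u u - f u)
    (u : Fin n → ℝ) (hu : u ∈ U) :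
    Filter.Tendsto
      (fun ε : ℝ => ε⁻¹ • (fderiv ℝ f (u + ε • u) - fderiv ℝ f u))
      (nhdsWithin 0 (Set.Ioi 0)) (nhds (fderiv ℝ b u)) ∧
    LinearMap.det ((fderiv ℝ b u : (Fin n → ℝ) →L[ℝ] (Fin n → ℝ)) :
      (Fin n → ℝ) →ₗ[ℝ] (Fin n → ℝ)) = 0 := by
  have hA : HasFDerivAt (fderiv ℝ f) (fderiv ℝ (fderiv ℝ f) u) u :=
    (((hf.contDiffAt (hU.mem_nhds hu)).fderiv_right le_rfl).differentiableAt
      one_ne_zero).hasFDerivAt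
  have hdiff : ∀ᶠ y in 𝓝 u, DifferentiableAt ℝ f y :=
    eventually_of_mem (hU.mem_nhds hu) fun y hy =>
      (hf.contDiffAt (hU.mem_nhds hy)).differentiableAt two_ne_zero
  have hDb : fderiv ℝ b u = fderiv ℝ (fderiv ℝ f) u u := by
    rw [funext hb]
    exact (hasFDerivAt_fderiv_apply_self_sub hdiff hA).fderiv
  have htend : Tendsto (fun ε : ℝ => ε⁻¹ • (fderiv ℝ f (u + ε • u) - fderiv ℝ f u))
      (𝓝[>] 0) (𝓝 (fderiv ℝ b u)) :=
    hDb ▸ (hA.tendsto_smul_sub_along u).mono_left (nhdsWithin_mono 0 fun _ h => ne_of_gt h)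
  have hray : ∀ᶠ ε : ℝ in 𝓝[>] 0, u + ε • u ∈ U := by
    have hcont : Continuous fun ε : ℝ => u + ε • u := by fun_prop
    exact nhdsWithin_le_nhds
      (hcont.continuousAt.preimage_mem_nhds (by simpa using hU.mem_nhds hu))
  refine ⟨htend, LinearMap.det_eq_zero_of_tendsto htend ?_⟩
  filter_upwards [hray] with ε hε
  rw [ContinuousLinearMap.toLinearMap_smul, LinearMap.det_smul, hsing _ hε _ hu, mul_zero]

/-- If `f` is C² on open `U` with `Df(u) - Df(v)` singular for all `u, v ∈ U`, and
`b(u) = Df(u)·u - f(u)`, then at any `u ∈ U` such that the segment `(1+ε)u`,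
`0 ≤ ε ≤ ε₀`, lies in `U`, the derivative `Db(u)` is the limit as `ε → 0⁺` of the
singular matrices `(Df(u + εu) - Df(u))/ε`, hence `Db(u)` is singular. -/
theorem stmt_15 (n : ℕ) (U : Set (Fin n → ℝ)) (hU : IsOpen U)
    (f : (Fin n → ℝ) → (Fin n → ℝ)) (hf : ContDiffOn ℝ 2 f U)
    (hsing : ∀ u ∈ U, ∀ v ∈ U,
      LinearMap.det ((fderiv ℝ f u - fderiv ℝ f v :
        (Fin n → ℝ) →L[ℝ] (Fin n → ℝ)) : (Fin n → ℝ) →ₗ[ℝ] (Fin n → ℝ)) = 0)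
    (b : (Fin n → ℝ) → (Fin n → ℝ)) (hb : ∀ u, b u = fderiv ℝ f u u - f u)
    (u : Fin n → ℝ) (hu : u ∈ U)
    (ε₀ : ℝ) (hε₀ : 0 < ε₀)
    (hseg : ∀ ε : ℝ, 0 ≤ ε → ε ≤ ε₀ → (1 + ε) • u ∈ U) :
    Filter.Tendsto
      (fun ε : ℝ => ε⁻¹ • (fderiv ℝ f (u + ε • u) - fderiv ℝ f u))
      (nhdsWithin 0 (Set.Ioi 0)) (nhds (fderiv ℝ b u)) ∧
    LinearMap.det ((fderiv ℝ b u : (Fin n → ℝ) →L[ℝ] (Fin n → ℝ)) :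
      (Fin n → ℝ) →ₗ[ℝ] (Fin n → ℝ)) = 0 :=
  stmt_15_general n U hU f hf hsing b hb u hu
end

section
/- The lines contained in the family of hyperboloids x² + y² = t(z² + 1), t > 0, together with the z-axis, partition ℝ³ into pairwise disjoint lines, and any two distinct lines in this family are skew (non-parallel and non-intersecting) — in particular ℝ³ can be partitioned into pairwise skew lines. -/
/-- The z-axis in ℝ³. -/
def zAxis : Set (ℝ × ℝ × ℝ) := {p | p.1 = 0 ∧ p.2.1 = 0}

/-- A ruling line of the hyperboloid `x² + y² = t (z² + 1)` through
`(√t cos θ, √t sin θ, 0)`. -/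
def ruling (t θ : ℝ) : Set (ℝ × ℝ × ℝ) :=
  {p | ∃ s : ℝ, p = (Real.sqrt t * Real.cos θ - s * (Real.sqrt t * Real.sin θ),
                     Real.sqrt t * Real.sin θ + s * (Real.sqrt t * Real.cos θ), s)}

/-- The family consisting of the z-axis together with the ruling lines of the
hyperboloids `x² + y² = t (z² + 1)`, `t > 0`. -/
def lineFamily : Set (Set (ℝ × ℝ × ℝ)) :=
  {zAxis} ∪ {l | ∃ t θ : ℝ, 0 < t ∧ l = ruling t θ}

/-!
Write a point of ℝ³ as `(ζ, z)` with `ζ = x + y I ∈ ℂ`. The ruling through `(a, b, 0)` is then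
`{(w (1 + z I), z)}` with `w = a + b I`, and the z-axis is the case `w = 0`, so the family is
indexed by `w ∈ ℂ`. The point `(ζ, z)` lies on the line of `w = ζ / (1 + z I)` and on no other,
which gives the partition. A translate of line `w` contains two points at heights differing by `1`
whose horizontal parts differ by `w I`; on line `w'` such points differ by `w' I`, so a translate
of line `w` can only be line `w` itself.
-/

open Complex

def skewLine (w : ℂ) : Set (ℝ × ℝ × ℝ) :=
  {p | (p.1 + p.2.1 * I : ℂ) = w * (1 + p.2.2 * I)}

lemma one_add_ofReal_mul_I_ne_zero (z : ℝ) : (1 + z * I : ℂ) ≠ 0 := by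
  intro h
  simpa using congrArg re h

lemma mem_skewLine_iff {w : ℂ} {p : ℝ × ℝ × ℝ} :
    p ∈ skewLine w ↔ w = (p.1 + p.2.1 * I) / (1 + p.2.2 * I) :=
  eq_comm.trans (eq_div_iff (one_add_ofReal_mul_I_ne_zero _)).symm

lemma existsUnique_mem_skewLine (p : ℝ × ℝ × ℝ) : ∃! w, p ∈ skewLine w := by
  simp only [mem_skewLine_iff]
  exact existsUnique_eq

lemma skewLine_zero : skewLine 0 = zAxis := by
  ext ⟨x, y, z⟩
  simp [skewLine, zAxis, Complex.ext_iff]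

lemma ruling_eq_skewLine (t θ : ℝ) : ruling t θ = skewLine (Real.sqrt t * exp (θ * I)) := by
  ext ⟨x, y, z⟩
  simp only [ruling, skewLine, Set.mem_ofPred_eq, Prod.mk.injEq, Complex.ext_iff]
  simp only [add_re, add_im, mul_re, mul_im, ofReal_re, ofReal_im, I_re, I_im, one_re, one_im,
    exp_ofReal_mul_I_re, exp_ofReal_mul_I_im, existsAndEq, and_true]
  constructor <;> rintro ⟨hx, hy⟩ <;> constructor <;> linarith

lemma lineFamily_eq_range_skewLine : lineFamily = Set.range skewLine := by
  ext l
  constructor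
  · rintro (rfl | ⟨t, θ, -, rfl⟩)
    · exact ⟨0, skewLine_zero⟩
    · exact ⟨_, (ruling_eq_skewLine t θ).symm⟩
  · rintro ⟨w, rfl⟩
    rcases eq_or_ne w 0 with rfl | hw
    · exact Or.inl skewLine_zero
    · refine Or.inr ⟨‖w‖ ^ 2, arg w, by positivity, ?_⟩
      rw [ruling_eq_skewLine, Real.sqrt_sq (norm_nonneg w), norm_mul_exp_arg_mul_I]

lemma eq_of_skewLine_eq_image_add {w w' : ℂ} {v : ℝ × ℝ × ℝ}
    (h : skewLine w' = (· + v) '' skewLine w) : w = w' := by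
  obtain ⟨v₁, v₂, v₃⟩ := v
  have h₀ : ((w.re, w.im, 0) : ℝ × ℝ × ℝ) ∈ skewLine w := by simp [skewLine]
  have h₁ : (((w * (1 + I)).re, (w * (1 + I)).im, 1) : ℝ × ℝ × ℝ) ∈ skewLine w := by
    simp only [skewLine, Set.mem_ofPred_eq, ofReal_one, one_mul, re_add_im]
  have e₀ := h ▸ Set.mem_image_of_mem (· + (v₁, v₂, v₃)) h₀
  have e₁ := h ▸ Set.mem_image_of_mem (· + (v₁, v₂, v₃)) h₁
  simp only [skewLine, Set.mem_ofPred_eq, Prod.mk_add_mk] at e₀ e₁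
  push_cast at e₀ e₁
  linear_combination (-I) * (e₁ - e₀ - re_add_im (w * (1 + I)) + re_add_im w) + (w - w') * I_sq

/-- The z-axis together with the ruling lines of the hyperboloids
`x² + y² = t(z² + 1)`, `t > 0`, partition ℝ³ into pairwise disjoint lines, any two
distinct ones of which are skew (disjoint and not translates of one another):
in particular ℝ³ can be partitioned into pairwise skew lines. -/
theorem stmt_16 :
    (∀ p : ℝ × ℝ × ℝ, ∃! l : Set (ℝ × ℝ × ℝ), l ∈ lineFamily ∧ p ∈ l) ∧
    (∀ l₁ ∈ lineFamily, ∀ l₂ ∈ lineFamily, l₁ ≠ l₂ →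
      Disjoint l₁ l₂ ∧ ¬ ∃ v : ℝ × ℝ × ℝ, l₂ = (fun p => p + v) '' l₁) := by
  rw [lineFamily_eq_range_skewLine]
  refine ⟨fun p => ?_, ?_⟩
  · obtain ⟨w, hw, hunique⟩ := existsUnique_mem_skewLine p
    refine ⟨skewLine w, ⟨⟨w, rfl⟩, hw⟩, ?_⟩
    rintro _ ⟨⟨w', rfl⟩, hw'⟩
    rw [hunique w' hw']
  · rintro _ ⟨w, rfl⟩ _ ⟨w', rfl⟩ hne
    have hww' : w ≠ w' := fun h => hne (h ▸ rfl)
    refine ⟨Set.disjoint_left.2 fun p hp hp' => hww' ?_, ?_⟩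
    · exact (existsUnique_mem_skewLine p).unique hp hp'
    · rintro ⟨v, hv⟩
      exact hww' (eq_of_skewLine_eq_image_add hv)
end

section
/- If A and B are 2×2 real matrices with A = [[a, b], [0, 0]], (a,b) ≠ (0,0), det B = 0, and the determinant bilinear form pairing of A and B is zero, i.e., det(A + B) = det A + det B, then either the second row of B is zero, or B is a linear combination of A and the matrix [[0,0],[a,b]]. -/
/-- Computational core of Lemma 2.2: if `A = [[a,b],[0,0]]` with `(a,b) ≠ (0,0)`,
`B` is singular, and `A, B` pair to zero under the determinant bilinear form
(`det(A+B) = det A + det B`), then either the second row of `B` is zero, or `B` is a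
linear combination of `A` and `[[0,0],[a,b]]`. -/
theorem stmt_19 (a b : ℝ) (hab : (a, b) ≠ (0, 0))
    (A B : Matrix (Fin 2) (Fin 2) ℝ)
    (hA : A = !![a, b; 0, 0])
    (hB : B.det = 0)
    (hpair : (A + B).det = A.det + B.det) :
    (B 1 0 = 0 ∧ B 1 1 = 0) ∨
    (∃ s t : ℝ, B = s • A + t • !![0, 0; a, b]) := by
  have hab' : a ≠ 0 ∨ b ≠ 0 := by
    by_contra h
    push_neg at h
    exact hab (by simp [h.1, h.2])
  set p := B 0 0; set q := B 0 1; set r := B 1 0; set w := B 1 1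
  have hBe : B = !![p, q; r, w] := by
    ext i j; fin_cases i <;> fin_cases j <;> simp [p, q, r, w]
  subst hA
  rw [hBe] at hB hpair ⊢
  simp [Matrix.det_fin_two, Matrix.add_apply] at hB hpair
  -- hpair : a * w - b * r = 0 (after ring_nf forms)
  have hpr : a * w = b * r := by nlinarith [hpair]
  by_cases hrw : r = 0 ∧ w = 0
  · left; exact hrw
  · right
    rcases hab' with ha | hb
    · refine ⟨p / a, r / a, ?_⟩
      have hw : w = r / a * b := by field_simp; linarith [hpr]
      have hq : q = p / a * b := by
        have hdet : p * w = q * r := by nlinarith [hB]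
        rcases eq_or_ne r 0 with h0 | h0
        · exfalso
          have : w = 0 := by rw [hw, h0]; ring
          exact hrw ⟨h0, this⟩
        · field_simp
          rw [hw] at hdet
          field_simp at hdet
          have h2 : (q * a - p * b) * r = 0 := by rw [show p * b = q * a by linarith]; ring
          rcases mul_eq_zero.mp h2 with h | h
          · linarith
          · exact absurd h h0
      ext i j; fin_cases i <;> fin_cases j <;>
        simp [Matrix.add_apply, hq, hw] <;> field_simp
    · refine ⟨q / b, w / b, ?_⟩
      have hr : r = w / b * a := by field_simp; nlinarith [hpr]
      have hp : p = q / b * a := by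
        have hdet : p * w = q * r := by nlinarith [hB]
        rcases eq_or_ne w 0 with h0 | h0
        · exfalso
          have : r = 0 := by rw [hr, h0]; ring
          exact hrw ⟨this, h0⟩
        · field_simp
          rw [hr] at hdet
          field_simp at hdet
          have h2 : (q * a - p * b) * w = 0 := by rw [show p * b = q * a by linarith]; ring
          rcases mul_eq_zero.mp h2 with h | h
          · linarith
          · exact absurd h h0
      ext i j; fin_cases i <;> fin_cases j <;>
        simp [Matrix.add_apply, hp, hr] <;> field_simp
end
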